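/- Let C be a convex polyhedral cone in a finite-dimensional real vector space that contains no nonzero linear subspace, and let R₀ be a one-dimensional face (extremal ray) of C. If R₁,…,Rₘ are the one-dimensional faces of C adjacent to R₀ (i.e., those Rᵢ such that R₀+Rᵢ is a two-dimensional face of C), then the linear span of R₀, R₁, …, Rₘ equals the linear span of C. -/

import Mathlib

/-!
Divide by the line `L` spanned by `R₀`. The image `C'` of `C` in `V ⧸ L` is again a salient
polyhedral cone, so by Minkowski's theorem it is spanned by its extremal rays. The preimage in
`C` of an extremal ray `R'` of `C'` is a face `F ⊇ R₀`; Minkowski's theorem for `F` yields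
an extremal ray `R` of `F` not contained in `L`, and then `F = R₀ + R`. So `R` is adjacent to
`R₀` and `R'` lies in the image of `R₀ + R`, whence `C ⊆ L + U = U` for `U` the span of `R₀`
and its neighbours.

Minkowski's theorem (a salient polyhedral cone is spanned by its extremal rays) comes from an
irredundant set of generators: each of them spans an extremal ray.
-/

open Module

variable {V : Type*} [AddCommGroup V] [Module ℝ V]

/-- `C` is a convex polyhedral cone: the set of nonnegative combinations of finitely many
vectors. -/
def IsPolyhedralCone (C : Set V) : Prop :=
  ∃ s : Finset V, C = {x | ∃ c : V → ℝ, (∀ v, 0 ≤ c v) ∧ x = ∑ v ∈ s, c v • v}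

/-- `F` is a subcone: contains `0`, closed under addition and nonnegative scaling. -/
def IsSubcone (F : Set V) : Prop :=
  0 ∈ F ∧ (∀ x ∈ F, ∀ y ∈ F, x + y ∈ F) ∧ ∀ t : ℝ, 0 ≤ t → ∀ x ∈ F, t • x ∈ F

/-- `F` is a face of the cone `C`: a subcone of `C` such that whenever `x + y ∈ F` with
`x, y ∈ C`, one has `x, y ∈ F`. -/
def IsFaceOf (C F : Set V) : Prop :=
  IsSubcone F ∧ F ⊆ C ∧ ∀ x ∈ C, ∀ y ∈ C, x + y ∈ F → x ∈ F ∧ y ∈ F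

/-- An extremal ray of `C`: a one-dimensional face. -/
def IsExtremalRayOf (C R : Set V) : Prop :=
  IsFaceOf C R ∧ Module.finrank ℝ (Submodule.span ℝ R) = 1

open Pointwise in
/-- Two distinct extremal rays `R`, `R'` of `C` are adjacent if `R + R'` is a face of `C`. -/
def AreAdjacent (C R R' : Set V) : Prop :=
  IsExtremalRayOf C R ∧ IsExtremalRayOf C R' ∧ R ≠ R' ∧ IsFaceOf C (R + R')

section Salient

variable {M : Type*} [AddGroup M]

def IsSalient (C : Set M) : Prop :=
  ∀ x ∈ C, -x ∈ C → x = 0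

theorem IsSalient.eq_zero_of_add_eq_zero {C : Set M} (hC : IsSalient C) {x y : M}
    (hx : x ∈ C) (hy : y ∈ C) (hxy : x + y = 0) : x = 0 :=
  hC x hx (by rwa [neg_eq_of_add_eq_zero_right hxy])

theorem IsSalient.mono {C D : Set M} (hC : IsSalient C) (hDC : D ⊆ C) : IsSalient D :=
  fun x hx hnx => hC x (hDC hx) (hDC hnx)

end Salient

def finsetCone (s : Finset V) : Set V :=
  {x | ∃ c : V → ℝ, (∀ v, 0 ≤ c v) ∧ x = ∑ v ∈ s, c v • v}

def nonnegRay (p : V) : Set V :=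
  {x | ∃ t : ℝ, 0 ≤ t ∧ x = t • p}

section Subcone

variable {W : Type*} [AddCommGroup W] [Module ℝ W]

theorem Submodule.isSubcone (p : Submodule ℝ V) : IsSubcone (p : Set V) :=
  ⟨p.zero_mem, fun _ hx _ hy => p.add_mem hx hy, fun t _ _ hx => p.smul_mem t hx⟩

theorem IsSubcone.sum_mem {F : Set V} (hF : IsSubcone F) {ι : Type*} {t : Finset ι} {g : ι → V}
    (h : ∀ i ∈ t, g i ∈ F) : ∑ i ∈ t, g i ∈ F :=
  Finset.sum_induction g (· ∈ F) (fun a b ha hb => hF.2.1 a ha b hb) hF.1 h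

theorem IsSubcone.inter {F G : Set V} (hF : IsSubcone F) (hG : IsSubcone G) :
    IsSubcone (F ∩ G) :=
  ⟨⟨hF.1, hG.1⟩, fun x hx y hy => ⟨hF.2.1 x hx.1 y hy.1, hG.2.1 x hx.2 y hy.2⟩,
    fun t ht x hx => ⟨hF.2.2 t ht x hx.1, hG.2.2 t ht x hx.2⟩⟩

theorem IsSubcone.image (f : V →ₗ[ℝ] W) {F : Set V} (hF : IsSubcone F) :
    IsSubcone (f '' F) := by
  refine ⟨⟨0, hF.1, map_zero f⟩, ?_, ?_⟩
  · rintro _ ⟨x, hx, rfl⟩ _ ⟨y, hy, rfl⟩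
    exact ⟨x + y, hF.2.1 x hx y hy, map_add f x y⟩
  · rintro t ht _ ⟨x, hx, rfl⟩
    exact ⟨t • x, hF.2.2 t ht x hx, map_smul f t x⟩

theorem IsSubcone.preimage (f : V →ₗ[ℝ] W) {G : Set W} (hG : IsSubcone G) :
    IsSubcone (f ⁻¹' G) := by
  refine ⟨?_, fun x hx y hy => ?_, fun t ht x hx => ?_⟩
  · simpa using hG.1
  · simpa using hG.2.1 _ hx _ hy
  · simpa using hG.2.2 t ht _ hx

theorem IsFaceOf.trans {C F G : Set V} (hF : IsFaceOf C F) (hG : IsFaceOf F G) :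
    IsFaceOf C G := by
  refine ⟨hG.1, hG.2.1.trans hF.2.1, fun x hx y hy hxy => ?_⟩
  obtain ⟨hxF, hyF⟩ := hF.2.2 x hx y hy (hG.2.1 hxy)
  exact hG.2.2 x hxF y hyF hxy

theorem IsFaceOf.inter_preimage (f : V →ₗ[ℝ] W) {C : Set V} {G : Set W} (hC : IsSubcone C)
    (hG : IsFaceOf (f '' C) G) : IsFaceOf C (C ∩ f ⁻¹' G) := by
  refine ⟨hC.inter (hG.1.preimage f), Set.inter_subset_left, fun x hx y hy hxy => ?_⟩
  have hfxy : f x + f y ∈ G := by simpa using hxy.2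
  obtain ⟨hfx, hfy⟩ := hG.2.2 _ ⟨x, hx, rfl⟩ _ ⟨y, hy, rfl⟩ hfxy
  exact ⟨⟨hx, hfx⟩, ⟨hy, hfy⟩⟩

end Subcone

section FinsetCone

variable {W : Type*} [AddCommGroup W] [Module ℝ W]

theorem isPolyhedralCone_iff {C : Set V} :
    IsPolyhedralCone C ↔ ∃ s : Finset V, C = finsetCone s :=
  Iff.rfl

theorem isSubcone_finsetCone (s : Finset V) : IsSubcone (finsetCone s) := by
  refine ⟨⟨0, fun _ => le_rfl, by simp⟩, ?_, ?_⟩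
  · rintro _ ⟨c, hc, rfl⟩ _ ⟨d, hd, rfl⟩
    exact ⟨c + d, fun v => add_nonneg (hc v) (hd v), by
      simp [add_smul, Finset.sum_add_distrib]⟩
  · rintro t ht _ ⟨c, hc, rfl⟩
    exact ⟨t • c, fun v => mul_nonneg ht (hc v), by simp [Finset.smul_sum, smul_smul]⟩

theorem subset_finsetCone (s : Finset V) : (s : Set V) ⊆ finsetCone s := by
  classical
  intro v hv
  refine ⟨Pi.single v 1, fun u => ?_, ?_⟩
  · by_cases h : u = v <;> simp [h]
  · rw [Finset.sum_eq_single_of_mem v hv fun u _ hu => by simp [hu]]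
    simp

theorem finsetCone_subset {s : Finset V} {F : Set V} (hF : IsSubcone F) (hs : (s : Set V) ⊆ F) :
    finsetCone s ⊆ F := by
  rintro _ ⟨c, hc, rfl⟩
  exact hF.sum_mem fun v hv => hF.2.2 _ (hc v) _ (hs hv)

theorem finsetCone_mono {s t : Finset V} (h : s ⊆ t) : finsetCone s ⊆ finsetCone t :=
  finsetCone_subset (isSubcone_finsetCone t) ((Finset.coe_subset.2 h).trans (subset_finsetCone t))

theorem exists_smul_add_of_mem_finsetCone [DecidableEq V] {s : Finset V} {v x : V}
    (hv : v ∈ s) (hx : x ∈ finsetCone s) :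
    ∃ a : ℝ, 0 ≤ a ∧ ∃ y ∈ finsetCone (s.erase v), x = a • v + y := by
  obtain ⟨c, hc, rfl⟩ := hx
  exact ⟨c v, hc v, _, ⟨c, hc, rfl⟩, (Finset.add_sum_erase s (fun u => c u • u) hv).symm⟩

theorem image_finsetCone [DecidableEq W] (f : V →ₗ[ℝ] W) (s : Finset V) :
    f '' finsetCone s = finsetCone (s.image f) := by
  apply Set.Subset.antisymm
  · rintro _ ⟨x, hx, rfl⟩
    refine finsetCone_subset ((isSubcone_finsetCone _).preimage f) (fun v hv => ?_) hx
    exact subset_finsetCone _ (Finset.mem_image_of_mem f hv)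
  · refine finsetCone_subset ((isSubcone_finsetCone s).image f) ?_
    rw [Finset.coe_image]
    exact Set.image_mono (subset_finsetCone s)

theorem IsPolyhedralCone.image (f : V →ₗ[ℝ] W) {C : Set V} (hC : IsPolyhedralCone C) :
    IsPolyhedralCone (f '' C) := by
  classical
  obtain ⟨s, rfl⟩ := isPolyhedralCone_iff.1 hC
  exact ⟨s.image f, image_finsetCone f s⟩

theorem IsPolyhedralCone.isSubcone {C : Set V} (hC : IsPolyhedralCone C) : IsSubcone C := by
  obtain ⟨s, rfl⟩ := isPolyhedralCone_iff.1 hC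
  exact isSubcone_finsetCone s

theorem IsFaceOf.isPolyhedralCone {C F : Set V} (hC : IsPolyhedralCone C) (hF : IsFaceOf C F) :
    IsPolyhedralCone F := by
  classical
  obtain ⟨s, rfl⟩ := isPolyhedralCone_iff.1 hC
  refine ⟨s.filter (· ∈ F), Set.Subset.antisymm (fun x hxF => ?_) ?_⟩
  · obtain ⟨c, hc, rfl⟩ := hF.2.1 hxF
    refine ⟨c, hc, (Finset.sum_filter_of_ne fun v hv hcv => ?_).symm⟩
    have hterm : c v • v ∈ finsetCone s :=
      (isSubcone_finsetCone s).2.2 _ (hc v) _ (subset_finsetCone s hv)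
    have hrest : ∑ u ∈ s.erase v, c u • u ∈ finsetCone s :=
      finsetCone_mono (s.erase_subset v) ⟨c, hc, rfl⟩
    obtain ⟨hvF, -⟩ := hF.2.2 _ hterm _ hrest
      (by rwa [Finset.add_sum_erase s (fun u => c u • u) hv])
    have hcv0 : c v ≠ 0 := fun h => hcv (by simp [h])
    simpa [smul_smul, hcv0] using hF.1.2.2 (c v)⁻¹ (inv_nonneg.2 (hc v)) _ hvF
  · exact finsetCone_subset hF.1 fun v hv => (Finset.mem_filter.1 hv).2

end FinsetCone

section Ray

theorem self_mem_nonnegRay (p : V) : p ∈ nonnegRay p :=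
  ⟨1, zero_le_one, (one_smul ℝ p).symm⟩

theorem isSubcone_nonnegRay (p : V) : IsSubcone (nonnegRay p) := by
  refine ⟨⟨0, le_rfl, (zero_smul ℝ p).symm⟩, ?_, ?_⟩
  · rintro _ ⟨a, ha, rfl⟩ _ ⟨b, hb, rfl⟩
    exact ⟨a + b, add_nonneg ha hb, (add_smul a b p).symm⟩
  · rintro t ht _ ⟨a, ha, rfl⟩
    exact ⟨t * a, mul_nonneg ht ha, (mul_smul t a p).symm⟩

theorem nonnegRay_subset {F : Set V} {p : V} (hF : IsSubcone F) (hp : p ∈ F) :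
    nonnegRay p ⊆ F := by
  rintro _ ⟨t, ht, rfl⟩
  exact hF.2.2 t ht p hp

theorem nonnegRay_subset_span_singleton (p : V) : nonnegRay p ⊆ Submodule.span ℝ {p} := by
  rintro _ ⟨t, -, rfl⟩
  exact Submodule.smul_mem _ t (Submodule.mem_span_singleton_self p)

theorem span_nonnegRay (p : V) : Submodule.span ℝ (nonnegRay p) = Submodule.span ℝ {p} :=
  le_antisymm (Submodule.span_le.2 (nonnegRay_subset_span_singleton p))
    (Submodule.span_mono (Set.singleton_subset_iff.2 (self_mem_nonnegRay p)))

theorem isExtremalRayOf_nonnegRay {C : Set V} {p : V} (hp : p ≠ 0)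
    (hface : IsFaceOf C (nonnegRay p)) : IsExtremalRayOf C (nonnegRay p) :=
  ⟨hface, by rw [span_nonnegRay, finrank_span_singleton hp]⟩

theorem IsExtremalRayOf.exists_mem_ne_zero {C R : Set V} (hR : IsExtremalRayOf C R) :
    ∃ p ∈ R, p ≠ 0 := by
  by_contra! h
  have hbot : Submodule.span ℝ R = ⊥ := Submodule.span_eq_bot.2 h
  have hrank := hR.2
  rw [hbot, finrank_bot] at hrank
  exact zero_ne_one hrank

theorem IsExtremalRayOf.eq_nonnegRay_of_mem {C R : Set V} (hC : IsSalient C)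
    (hR : IsExtremalRayOf C R) {p : V} (hp : p ∈ R) (hp0 : p ≠ 0) : R = nonnegRay p := by
  have : FiniteDimensional ℝ (Submodule.span ℝ R) :=
    Module.finite_of_finrank_pos (by simp [hR.2])
  have hspan : Submodule.span ℝ {p} = Submodule.span ℝ R :=
    Submodule.eq_of_le_of_finrank_eq (Submodule.span_mono (Set.singleton_subset_iff.2 hp))
      (by rw [hR.2, finrank_span_singleton hp0])
  refine Set.Subset.antisymm (fun x hx => ?_) (nonnegRay_subset hR.1.1 hp)
  obtain ⟨t, rfl⟩ := Submodule.mem_span_singleton.1 (hspan ▸ Submodule.subset_span hx)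
  rcases le_or_gt 0 t with ht | ht
  · exact ⟨t, ht, rfl⟩
  · have hneg : -(t • p) ∈ R := by
      simpa using hR.1.1.2.2 (-t) (by linarith) p hp
    refine ⟨0, le_rfl, ?_⟩
    rw [zero_smul]
    exact hC _ (hR.1.2.1 hx) (hR.1.2.1 hneg)

theorem IsExtremalRayOf.eq_nonnegRay {C R : Set V} (hC : IsSalient C)
    (hR : IsExtremalRayOf C R) : ∃ p ≠ 0, R = nonnegRay p := by
  obtain ⟨p, hp, hp0⟩ := hR.exists_mem_ne_zero
  exact ⟨p, hp0, hR.eq_nonnegRay_of_mem hC hp hp0⟩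

end Ray

section Minkowski

theorem finsetCone_erase_eq [DecidableEq V] {s : Finset V} {v : V}
    (hv : v ∈ finsetCone (s.erase v)) : finsetCone (s.erase v) = finsetCone s := by
  refine Set.Subset.antisymm (finsetCone_mono (s.erase_subset v))
    (finsetCone_subset (isSubcone_finsetCone _) fun u hu => ?_)
  by_cases huv : u = v
  · exact huv ▸ hv
  · exact subset_finsetCone _ (Finset.mem_erase.2 ⟨huv, hu⟩)

theorem exists_finsetCone_eq_irredundant [DecidableEq V] (s : Finset V) :
    ∃ t : Finset V, finsetCone t = finsetCone s ∧
      ∀ v ∈ t, v ∉ finsetCone (t.erase v) := by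
  induction s using Finset.strongInduction with
  | H s ih =>
    by_cases hred : ∃ v ∈ s, v ∈ finsetCone (s.erase v)
    · obtain ⟨v, hv, hvs⟩ := hred
      obtain ⟨t, ht, hirr⟩ := ih _ (Finset.erase_ssubset hv)
      exact ⟨t, ht.trans (finsetCone_erase_eq hvs), hirr⟩
    · push Not at hred
      exact ⟨s, rfl, hred⟩

-- Write `x = a • v + x'`, `y = b • v + y'` with `x', y'` in the cone of the other generators;
-- then `x' + y'` is a multiple of `v`, not a positive one by irredundancy, so salience gives
-- `x' = y' = 0`.
theorem isFaceOf_nonnegRay_of_not_mem_erase [DecidableEq V] {s : Finset V} {v : V}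
    (hC : IsSalient (finsetCone s)) (hv : v ∈ s) (hv' : v ∉ finsetCone (s.erase v)) :
    IsFaceOf (finsetCone s) (nonnegRay v) := by
  have hcone := isSubcone_finsetCone s
  have herase : finsetCone (s.erase v) ⊆ finsetCone s := finsetCone_mono (s.erase_subset v)
  have hvC : v ∈ finsetCone s := subset_finsetCone s hv
  refine ⟨isSubcone_nonnegRay v, nonnegRay_subset hcone hvC, ?_⟩
  rintro x hx y hy ⟨l, -, hxy⟩
  obtain ⟨a, ha, x', hx', rfl⟩ := exists_smul_add_of_mem_finsetCone hv hx
  obtain ⟨b, hb, y', hy', rfl⟩ := exists_smul_add_of_mem_finsetCone hv hy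
  have hsum : x' + y' = (l - a - b) • v := by
    rw [sub_smul, sub_smul, ← hxy]; abel
  have hμ : l - a - b ≤ 0 := by
    by_contra! hμ
    refine hv' ?_
    have hmem : (l - a - b)⁻¹ • (x' + y') ∈ finsetCone (s.erase v) :=
      (isSubcone_finsetCone _).2.2 _ (inv_nonneg.2 hμ.le) _
        ((isSubcone_finsetCone _).2.1 _ hx' _ hy')
    rwa [hsum, smul_smul, inv_mul_cancel₀ hμ.ne', one_smul] at hmem
  have hrest : -(l - a - b) • v ∈ finsetCone s := hcone.2.2 _ (by linarith) _ hvC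
  have hx'0 : x' = 0 := hC.eq_zero_of_add_eq_zero (herase hx')
    (hcone.2.1 _ (herase hy') _ hrest) (by rw [← add_assoc, hsum, neg_smul, add_neg_cancel])
  subst hx'0
  rw [zero_add] at hsum
  have hy'0 : y' = 0 := hC.eq_zero_of_add_eq_zero (herase hy') hrest
    (by rw [hsum, neg_smul, add_neg_cancel])
  rw [hy'0, add_zero, add_zero]
  exact ⟨⟨a, ha, rfl⟩, ⟨b, hb, rfl⟩⟩

theorem IsPolyhedralCone.subset_span_extremalRays {C : Set V} (hC : IsPolyhedralCone C)
    (hsal : IsSalient C) :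
    C ⊆ Submodule.span ℝ (⋃ R ∈ {R : Set V | IsExtremalRayOf C R}, R) := by
  classical
  obtain ⟨s, rfl⟩ := isPolyhedralCone_iff.1 hC
  obtain ⟨t, ht, hirr⟩ := exists_finsetCone_eq_irredundant s
  rw [← ht] at hsal ⊢
  refine finsetCone_subset (Submodule.isSubcone _) fun v hv => Submodule.subset_span ?_
  have hv0 : v ≠ 0 := fun h => hirr v hv (h ▸ (isSubcone_finsetCone _).1)
  exact Set.mem_biUnion (isExtremalRayOf_nonnegRay hv0
    (isFaceOf_nonnegRay_of_not_mem_erase hsal hv (hirr v hv))) (self_mem_nonnegRay v)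

end Minkowski

section Quotient

open Pointwise

variable {C : Set V} {x₀ : V}

theorem mkQ_span_singleton_self (x₀ : V) : (ℝ ∙ x₀).mkQ x₀ = 0 :=
  (Submodule.Quotient.mk_eq_zero _).2 (Submodule.mem_span_singleton_self x₀)

theorem isSalient_image_mkQ (hC : IsSubcone C) (hR₀ : IsFaceOf C (nonnegRay x₀)) :
    IsSalient ((ℝ ∙ x₀).mkQ '' C) := by
  rintro _ ⟨a, ha, rfl⟩ ⟨c, hc, hca⟩
  have hac : a + c ∈ ℝ ∙ x₀ := by
    rw [← Submodule.Quotient.mk_eq_zero, Submodule.Quotient.mk_add]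
    simp only [Submodule.mkQ_apply] at hca
    rw [hca, add_neg_cancel]
  obtain ⟨t, ht⟩ := Submodule.mem_span_singleton.1 hac
  -- `a + (c + t⁻ • x₀) = t⁺ • x₀ ∈ R₀`, and `R₀` is a face.
  have hc' : c + t⁻ • x₀ ∈ C := hC.2.1 _ hc _ (hR₀.2.1 ⟨t⁻, negPart_nonneg t, rfl⟩)
  obtain ⟨r, -, rfl⟩ := (hR₀.2.2 a ha _ hc' ⟨t⁺, posPart_nonneg t, by
    rw [← add_assoc, ← ht, eq_add_of_sub_eq (posPart_sub_negPart t), add_smul]⟩).1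
  rw [map_smul, mkQ_span_singleton_self, smul_zero]

theorem subset_nonnegRay_add_nonnegRay {F : Set V} {w : V} (hF : IsSubcone F) (hx₀ : x₀ ∈ F)
    (hR : IsFaceOf F (nonnegRay w)) (hw : (ℝ ∙ x₀).mkQ w ≠ 0)
    (himage : (ℝ ∙ x₀).mkQ '' F ⊆ nonnegRay ((ℝ ∙ x₀).mkQ w)) :
    F ⊆ nonnegRay x₀ + nonnegRay w := by
  intro x hx
  obtain ⟨b, hb, hxb⟩ := himage ⟨x, hx, rfl⟩
  have hxw : x - b • w ∈ ℝ ∙ x₀ := by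
    rw [← Submodule.Quotient.mk_eq_zero, Submodule.Quotient.mk_sub, Submodule.Quotient.mk_smul]
    simp only [Submodule.mkQ_apply] at hxb
    rw [hxb, sub_self]
  obtain ⟨a, ha⟩ := Submodule.mem_span_singleton.1 hxw
  rcases le_or_gt 0 a with ha0 | ha0
  · exact Set.mem_add.2
      ⟨a • x₀, ⟨a, ha0, rfl⟩, b • w, ⟨b, hb, rfl⟩, by rw [ha]; abel⟩
  -- Otherwise `x + (-a) • x₀ = b • w`, so `(-a) • x₀` lies on the ray through `w`, and
  -- projecting to the quotient shows that it vanishes.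
  obtain ⟨t, -, ht⟩ := (hR.2.2 x hx _ (hF.2.2 (-a) (by linarith) _ hx₀)
    ⟨b, hb, by rw [neg_smul, ha]; abel⟩).2
  have ht0 : t = 0 := by
    have := congrArg (ℝ ∙ x₀).mkQ ht
    rw [map_smul, map_smul, mkQ_span_singleton_self, smul_zero, eq_comm, smul_eq_zero] at this
    exact this.resolve_right hw
  have hax : a • x₀ = 0 := by rw [← neg_eq_zero, ← neg_smul, ht, ht0, zero_smul]
  refine Set.mem_add.2
    ⟨0, ⟨0, le_rfl, (zero_smul ℝ x₀).symm⟩, b • w, ⟨b, hb, rfl⟩, ?_⟩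
  rw [zero_add, eq_comm, ← sub_eq_zero, ← ha, hax]

theorem exists_areAdjacent_subset_image_add (hC : IsPolyhedralCone C) (hsal : IsSalient C)
    (hR₀ : IsExtremalRayOf C (nonnegRay x₀)) {R' : Set (V ⧸ ℝ ∙ x₀)}
    (hR' : IsExtremalRayOf ((ℝ ∙ x₀).mkQ '' C) R') :
    ∃ R, AreAdjacent C (nonnegRay x₀) R ∧
      R' ⊆ (ℝ ∙ x₀).mkQ '' (nonnegRay x₀ + R) := by
  set π := (ℝ ∙ x₀).mkQ
  set F := C ∩ π ⁻¹' R'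
  have hF : IsFaceOf C F := hR'.1.inter_preimage π hC.isSubcone
  have hsalF : IsSalient F := hsal.mono hF.2.1
  have hR'F : R' ⊆ π '' F := by
    intro y hy
    obtain ⟨c, hc, rfl⟩ := hR'.1.2.1 hy
    exact ⟨c, ⟨hc, hy⟩, rfl⟩
  have hx₀F : x₀ ∈ F := by
    refine ⟨hR₀.1.2.1 (self_mem_nonnegRay x₀), ?_⟩
    simpa only [Set.mem_preimage, π, mkQ_span_singleton_self] using hR'.1.1.1
  -- Minkowski for `F`: as `π '' F = R' ≠ 0`, some extremal ray of `F` leaves the kernel of `π`.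
  obtain ⟨R, hRF, w, hwR, hπw⟩ : ∃ R, IsExtremalRayOf F R ∧ ∃ w ∈ R, π w ≠ 0 := by
    by_contra! h
    obtain ⟨p, hp, hp0⟩ := hR'.exists_mem_ne_zero
    obtain ⟨c, hc, rfl⟩ := hR'F hp
    have hker : Submodule.span ℝ (⋃ R ∈ {R | IsExtremalRayOf F R}, R) ≤ LinearMap.ker π :=
      Submodule.span_le.2 (Set.iUnion₂_subset fun R hR w hw => h R hR w hw)
    exact hp0 (hker ((hF.isPolyhedralCone hC).subset_span_extremalRays hsalF hc))
  obtain rfl := hRF.eq_nonnegRay_of_mem hsalF hwR fun h => hπw (h ▸ map_zero π)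
  have hR'eq : R' = nonnegRay (π w) :=
    hR'.eq_nonnegRay_of_mem (isSalient_image_mkQ hC.isSubcone hR₀.1) (hRF.1.2.1 hwR).2 hπw
  have hFeq : F = nonnegRay x₀ + nonnegRay w := by
    refine Set.Subset.antisymm (subset_nonnegRay_add_nonnegRay hF.1 hx₀F hRF.1 hπw ?_)
      (Set.add_subset_iff.2 fun a ha b hb =>
        hF.1.2.1 a (nonnegRay_subset hF.1 hx₀F ha) b (hRF.1.2.1 hb))
    rintro _ ⟨x, hx, rfl⟩
    exact hR'eq ▸ hx.2
  have hne : nonnegRay x₀ ≠ nonnegRay w := by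
    intro h
    obtain ⟨t, -, ht⟩ := h ▸ self_mem_nonnegRay w
    exact hπw (by rw [ht, map_smul, mkQ_span_singleton_self, smul_zero])
  exact ⟨nonnegRay w, ⟨hR₀, ⟨hF.trans hRF.1, hRF.2⟩, hne, hFeq ▸ hF⟩, hFeq ▸ hR'F⟩

end Quotient

theorem stmt0_general (C : Set V) (hC : IsPolyhedralCone C)
    (hsalient : ∀ x ∈ C, -x ∈ C → x = 0)
    (R₀ : Set V) (hR₀ : IsExtremalRayOf C R₀) :
    Submodule.span ℝ (R₀ ∪ ⋃ R ∈ {R : Set V | AreAdjacent C R₀ R}, R) =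
      Submodule.span ℝ C := by
  obtain ⟨x₀, -, rfl⟩ := hR₀.eq_nonnegRay hsalient
  set U := Submodule.span ℝ
    (nonnegRay x₀ ∪ ⋃ R ∈ {R : Set V | AreAdjacent C (nonnegRay x₀) R}, R)
  refine le_antisymm (Submodule.span_mono (Set.union_subset hR₀.1.2.1
    (Set.iUnion₂_subset fun R hR => hR.2.1.1.2.1))) (Submodule.span_le.2 fun x hx => ?_)
  have hlineU : ℝ ∙ x₀ ≤ U := Submodule.span_le.2 (Set.singleton_subset_iff.2
    (Submodule.subset_span (Or.inl (self_mem_nonnegRay x₀))))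
  have himage : (ℝ ∙ x₀).mkQ '' C ⊆ U.map (ℝ ∙ x₀).mkQ := by
    refine ((hC.image _).subset_span_extremalRays (isSalient_image_mkQ hC.isSubcone hR₀.1)).trans
      (Submodule.span_le.2 (Set.iUnion₂_subset fun R' hR' => ?_))
    obtain ⟨R, hR, hR'R⟩ := exists_areAdjacent_subset_image_add hC hsalient hR₀ hR'
    rw [Submodule.map_coe]
    refine hR'R.trans (Set.image_mono (Set.add_subset_iff.2 fun a ha b hb => U.add_mem ?_ ?_))
    · exact Submodule.subset_span (Or.inl ha)
    · exact Submodule.subset_span (Or.inr (Set.mem_biUnion hR hb))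
  have hxU : x ∈ (U.map (ℝ ∙ x₀).mkQ).comap (ℝ ∙ x₀).mkQ := himage ⟨x, hx, rfl⟩
  rwa [Submodule.comap_map_mkQ, sup_eq_right.2 hlineU] at hxU

theorem stmt0 [FiniteDimensional ℝ V] (C : Set V) (hC : IsPolyhedralCone C)
    (hsalient : ∀ x ∈ C, -x ∈ C → x = 0)
    (R₀ : Set V) (hR₀ : IsExtremalRayOf C R₀) :
    Submodule.span ℝ (R₀ ∪ ⋃ R ∈ {R : Set V | AreAdjacent C R₀ R}, R) =
      Submodule.span ℝ C :=
  stmt0_general C hC hsalient R₀ hR₀
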